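/- arXiv:2303.16599 — 6 statements merged into one kernel-verified Lean document; each statement's English description precedes it below -/
import Mathlib

section
/- Let d ∈ (0, 1/2) and h be a positive integer. Then the series Σ_{l=0}^∞ ((h+l)^d − l^d)^2 converges, and there is a constant C(d) such that Σ_{l=0}^∞ ((h+l)^d − l^d)^2 ≤ C(d) · h^{2d+1} for all h ≥ 1. -/
open Real Finset

/-! For `l ≤ h`, subadditivity of `x ↦ x ^ d` gives `(h + l) ^ d - l ^ d ≤ h ^ d`, so these `h + 1`
terms contribute at most `2 h ^ (2d + 1)`. For `l > h`, concavity gives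
`(h + l) ^ d - l ^ d ≤ d h l ^ (d - 1)`, and comparing `∑_{l > h} l ^ (2d - 2)` with
`∫_h^∞ x ^ (2d - 2) dx = h ^ (2d - 1) / (1 - 2d)`, finite as `2d - 2 < -1`, bounds the tail by
`d² / (1 - 2d) · h ^ (2d + 1)`. -/

lemma rpow_add_sub_rpow_le_mul_rpow_sub_one {p x t : ℝ} (hp₀ : 0 ≤ p) (hp₁ : p ≤ 1) (hx : 0 < x)
    (ht : 0 ≤ t) : (x + t) ^ p - x ^ p ≤ p * t * x ^ (p - 1) := by
  have hsplit : (x + t) ^ p = x ^ p * (1 + t / x) ^ p := by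
    rw [← mul_rpow hx.le (by positivity), mul_add, mul_one, mul_div_cancel₀ _ hx.ne']
  have hbern : (1 + t / x) ^ p ≤ 1 + p * (t / x) :=
    rpow_one_add_le_one_add_mul_self (by linarith [div_nonneg ht hx.le]) hp₀ hp₁
  have hxp : x ^ (p - 1) = x ^ p / x := by rw [rpow_sub_one hx.ne']
  calc (x + t) ^ p - x ^ p ≤ x ^ p * (1 + p * (t / x)) - x ^ p := by
        rw [hsplit]; gcongr
    _ = p * t * x ^ (p - 1) := by rw [hxp]; field_simp; ring

lemma sum_range_rpow_le_of_lt_neg_one {p c : ℝ} (hp : p < -1) (hc : 0 < c) (n : ℕ) :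
    ∑ i ∈ range n, (c + (i + 1 : ℕ)) ^ p ≤ c ^ (p + 1) / -(p + 1) := by
  have hanti : AntitoneOn (fun x : ℝ ↦ x ^ p) (Set.Icc c (c + n)) := fun x hx y _ hxy ↦
    rpow_le_rpow_of_nonpos (hc.trans_le hx.1) hxy (by linarith)
  have h0 : (0 : ℝ) ∉ Set.uIcc c (c + n) := by
    rw [Set.uIcc_of_le (by simp)]; exact fun h ↦ hc.not_ge h.1
  calc ∑ i ∈ range n, (c + (i + 1 : ℕ)) ^ p ≤ ∫ x in c..c + n, x ^ p := hanti.sum_le_integral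
    _ = ((c + n) ^ (p + 1) - c ^ (p + 1)) / (p + 1) := integral_rpow (.inr ⟨hp.ne, h0⟩)
    _ ≤ c ^ (p + 1) / -(p + 1) := by
      rw [div_neg, ← neg_div]
      refine div_le_div_of_nonpos_of_le (by linarith) ?_
      linarith [rpow_nonneg (hc.le.trans (le_add_of_nonneg_right n.cast_nonneg)) (p + 1)]

section
variable {d : ℝ}

lemma sq_rpow_add_sub_rpow_le_rpow (hd₀ : 0 ≤ d) (hd₁ : d ≤ 1) {t x : ℝ} (ht : 0 ≤ t)
    (hx : 0 ≤ x) : ((t + x) ^ d - x ^ d) ^ 2 ≤ t ^ (2 * d) := by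
  have hmono : x ^ d ≤ (t + x) ^ d := rpow_le_rpow hx (by linarith) hd₀
  have hsub : (t + x) ^ d ≤ t ^ d + x ^ d := rpow_add_le_add_rpow ht hx hd₀ hd₁
  calc ((t + x) ^ d - x ^ d) ^ 2 ≤ (t ^ d) ^ 2 := by gcongr; linarith
    _ = t ^ (2 * d) := by rw [← rpow_mul_natCast ht]; ring_nf

lemma sq_rpow_add_sub_rpow_le_mul_rpow (hd₀ : 0 ≤ d) (hd₁ : d ≤ 1) {t x : ℝ} (ht : 0 ≤ t)
    (hx : 0 < x) : ((t + x) ^ d - x ^ d) ^ 2 ≤ d ^ 2 * t ^ 2 * x ^ (2 * d - 2) := by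
  have hmono : x ^ d ≤ (t + x) ^ d := rpow_le_rpow hx.le (by linarith) hd₀
  have htan := rpow_add_sub_rpow_le_mul_rpow_sub_one hd₀ hd₁ hx ht
  rw [add_comm x] at htan
  calc ((t + x) ^ d - x ^ d) ^ 2 ≤ (d * t * x ^ (d - 1)) ^ 2 := by gcongr
    _ = d ^ 2 * t ^ 2 * x ^ (2 * d - 2) := by
      rw [mul_pow, ← rpow_mul_natCast hx.le]; ring_nf

lemma sum_range_sq_rpow_add_sub_rpow_head_le (hd₀ : 0 ≤ d) (hd₁ : d ≤ 1) {h : ℕ} (hh : 1 ≤ h) :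
    ∑ l ∈ range (h + 1), (((h : ℝ) + l) ^ d - (l : ℝ) ^ d) ^ 2 ≤ 2 * (h : ℝ) ^ (2 * d + 1) := by
  have hh' : (1 : ℝ) ≤ h := by exact_mod_cast hh
  calc ∑ l ∈ range (h + 1), (((h : ℝ) + l) ^ d - (l : ℝ) ^ d) ^ 2
      ≤ ∑ _l ∈ range (h + 1), (h : ℝ) ^ (2 * d) :=
        sum_le_sum fun l _ ↦ sq_rpow_add_sub_rpow_le_rpow hd₀ hd₁ h.cast_nonneg l.cast_nonneg
    _ = ((h : ℝ) + 1) * (h : ℝ) ^ (2 * d) := by simp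
    _ ≤ 2 * h * (h : ℝ) ^ (2 * d) := by gcongr; linarith
    _ = 2 * (h : ℝ) ^ (2 * d + 1) := by rw [rpow_add_one (by positivity)]; ring

lemma sum_range_sq_rpow_add_sub_rpow_tail_le (hd₀ : 0 ≤ d) (hd : d < 1 / 2) {h : ℕ} (hh : 1 ≤ h)
    (n : ℕ) :
    ∑ i ∈ range n, (((h : ℝ) + (i + (h + 1) : ℕ)) ^ d - ((i + (h + 1) : ℕ) : ℝ) ^ d) ^ 2 ≤
      d ^ 2 / (1 - 2 * d) * (h : ℝ) ^ (2 * d + 1) := by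
  have hh' : (0 : ℝ) < h := by exact_mod_cast hh
  have hcast (i : ℕ) : ((i + (h + 1) : ℕ) : ℝ) = h + (i + 1 : ℕ) := by push_cast; ring
  have hsum := sum_range_rpow_le_of_lt_neg_one (p := 2 * d - 2) (by linarith) hh' n
  rw [show 2 * d - 2 + 1 = 2 * d - 1 by ring, show -(2 * d - 1) = 1 - 2 * d by ring] at hsum
  calc ∑ i ∈ range n, (((h : ℝ) + (i + (h + 1) : ℕ)) ^ d - ((i + (h + 1) : ℕ) : ℝ) ^ d) ^ 2
      ≤ ∑ i ∈ range n, d ^ 2 * (h : ℝ) ^ 2 * ((h : ℝ) + (i + 1 : ℕ)) ^ (2 * d - 2) :=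
        sum_le_sum fun i _ ↦ by
          rw [hcast]; exact sq_rpow_add_sub_rpow_le_mul_rpow hd₀ (by linarith) hh'.le (by positivity)
    _ = d ^ 2 * (h : ℝ) ^ 2 * ∑ i ∈ range n, ((h : ℝ) + (i + 1 : ℕ)) ^ (2 * d - 2) := by
      rw [mul_sum]
    _ ≤ d ^ 2 * (h : ℝ) ^ 2 * ((h : ℝ) ^ (2 * d - 1) / (1 - 2 * d)) := by gcongr
    _ = d ^ 2 / (1 - 2 * d) * (h : ℝ) ^ (2 * d + 1) := by
      rw [show 2 * d + 1 = 2 * d - 1 + 2 by ring, rpow_add hh', rpow_two]; ring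

end

theorem stmt5 (d : ℝ) (hd : 0 < d) (hd2 : d < 1 / 2) :
    ∃ C : ℝ, 0 ≤ C ∧ ∀ h : ℕ, 1 ≤ h →
      Summable (fun l : ℕ => (((h : ℝ) + (l : ℝ)) ^ d - (l : ℝ) ^ d) ^ 2) ∧
      ∑' l : ℕ, (((h : ℝ) + (l : ℝ)) ^ d - (l : ℝ) ^ d) ^ 2 ≤ C * (h : ℝ) ^ (2 * d + 1) := by
  have hd2' : 0 < 1 - 2 * d := by linarith
  refine ⟨2 + d ^ 2 / (1 - 2 * d), by positivity, fun h hh ↦ ?_⟩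
  set f : ℕ → ℝ := fun l ↦ (((h : ℝ) + (l : ℝ)) ^ d - (l : ℝ) ^ d) ^ 2
  have htail := sum_range_sq_rpow_add_sub_rpow_tail_le hd.le hd2 hh
  have hf : Summable f :=
    (summable_nat_add_iff (h + 1)).mp (summable_of_sum_range_le (fun _ ↦ sq_nonneg _) htail)
  refine ⟨hf, ?_⟩
  rw [← hf.sum_add_tsum_nat_add (h + 1)]
  linarith [sum_range_sq_rpow_add_sub_rpow_head_le hd.le (by linarith) hh,
    tsum_le_of_sum_range_le (fun _ ↦ sq_nonneg _) htail]
end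

section
/- Let d_n = c/log n for a constant c > 0 and α₁ ∈ (0,1), and let h = h_n = ⌊n^{α₁}⌋. Then h^{−1} Σ_{l=1}^{h} l^{2 d_n} → e^{2 c α₁} as n → ∞. -/
/-!
Since `l ↦ l ^ t` is monotone for `t ≥ 0`, comparing the sum with an integral squeezes
`h⁻¹ ∑_{l=1}^h l ^ t` between `h ^ t / (1 + t)` and `h ^ t`. With `t = 2c / log n → 0` both bounds
behave like `h ^ t`, and `h ^ t = (h / n^α₁) ^ t * (n^α₁) ^ t`, where `(n^α₁) ^ t = e^{2cα₁}` exactly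
and `(h / n^α₁) ^ t → 1 ^ 0 = 1`.
-/

open Filter Topology Finset

lemma sum_Icc_rpow_le_mul (h : ℕ) {t : ℝ} (ht : 0 ≤ t) :
    ∑ l ∈ Icc 1 h, (l : ℝ) ^ t ≤ h * (h : ℝ) ^ t := by
  calc ∑ l ∈ Icc 1 h, (l : ℝ) ^ t ≤ ∑ _l ∈ Icc 1 h, (h : ℝ) ^ t :=
        sum_le_sum fun l hl =>
          Real.rpow_le_rpow l.cast_nonneg (Nat.cast_le.2 (mem_Icc.1 hl).2) ht
    _ = h * (h : ℝ) ^ t := by rw [sum_const, Nat.card_Icc, nsmul_eq_mul, Nat.add_sub_cancel]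

lemma rpow_add_one_div_le_sum_Icc_rpow (h : ℕ) {t : ℝ} (ht : 0 ≤ t) :
    (h : ℝ) ^ (t + 1) / (t + 1) ≤ ∑ l ∈ Icc 1 h, (l : ℝ) ^ t := by
  have hmono : MonotoneOn (fun x : ℝ => x ^ t) (Set.Icc 0 (0 + (h : ℝ))) :=
    fun a ha _ _ hab => Real.rpow_le_rpow ha.1 hab ht
  have hint := hmono.integral_le_sum
  rw [integral_rpow (Or.inl (by linarith)), Real.zero_rpow (by linarith)] at hint
  rw [← Ico_add_one_right_eq_Icc, sum_Ico_eq_sum_range]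
  simpa [add_comm] using hint

lemma rpow_div_one_add_le_inv_mul_sum_Icc_rpow {h : ℕ} (hh : 0 < h) {t : ℝ} (ht : 0 ≤ t) :
    (h : ℝ) ^ t / (1 + t) ≤ (h : ℝ)⁻¹ * ∑ l ∈ Icc 1 h, (l : ℝ) ^ t := by
  have hh' : (0 : ℝ) < h := Nat.cast_pos.2 hh
  calc (h : ℝ) ^ t / (1 + t) = (h : ℝ)⁻¹ * ((h : ℝ) ^ (t + 1) / (t + 1)) := by
        rw [Real.rpow_add_one hh'.ne']
        field_simp
        ring
    _ ≤ (h : ℝ)⁻¹ * ∑ l ∈ Icc 1 h, (l : ℝ) ^ t :=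
        mul_le_mul_of_nonneg_left (rpow_add_one_div_le_sum_Icc_rpow h ht) (by positivity)

lemma inv_mul_sum_Icc_rpow_le {h : ℕ} (hh : 0 < h) {t : ℝ} (ht : 0 ≤ t) :
    (h : ℝ)⁻¹ * ∑ l ∈ Icc 1 h, (l : ℝ) ^ t ≤ (h : ℝ) ^ t := by
  rw [inv_mul_le_iff₀ (Nat.cast_pos.2 hh)]
  exact sum_Icc_rpow_le_mul h ht

lemma tendsto_inv_mul_sum_Icc_rpow {ι : Type*} {L : Filter ι} {h : ι → ℕ} {t : ι → ℝ} {a : ℝ}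
    (hh : ∀ᶠ i in L, 0 < h i) (ht : ∀ᶠ i in L, 0 ≤ t i) (ht0 : Tendsto t L (𝓝 0))
    (hlim : Tendsto (fun i => (h i : ℝ) ^ t i) L (𝓝 a)) :
    Tendsto (fun i => (h i : ℝ)⁻¹ * ∑ l ∈ Icc 1 (h i), (l : ℝ) ^ t i) L (𝓝 a) := by
  have hlow : Tendsto (fun i => (h i : ℝ) ^ t i / (1 + t i)) L (𝓝 a) := by
    have := hlim.div (tendsto_const_nhds.add ht0) (by norm_num : (1 : ℝ) + 0 ≠ 0)
    rwa [add_zero, div_one] at this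
  refine tendsto_of_tendsto_of_tendsto_of_le_of_le' hlow hlim ?_ ?_
  · filter_upwards [hh, ht] with i hi hti
    exact rpow_div_one_add_le_inv_mul_sum_Icc_rpow hi hti
  · filter_upwards [hh, ht] with i hi hti
    exact inv_mul_sum_Icc_rpow_le hi hti

lemma rpow_rpow_div_log {x : ℝ} (hx : 1 < x) (c α : ℝ) :
    (x ^ α) ^ (2 * (c / Real.log x)) = Real.exp (2 * c * α) := by
  have hlog : Real.log x ≠ 0 := (Real.log_pos hx).ne'
  rw [← Real.rpow_mul (by linarith), Real.rpow_def_of_pos (by linarith)]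
  congr 1
  field_simp

lemma tendsto_two_mul_div_log_natCast (c : ℝ) :
    Tendsto (fun n : ℕ => 2 * (c / Real.log n)) atTop (𝓝 0) := by
  simpa using ((tendsto_const_nhds (x := c)).div_atTop
    (Real.tendsto_log_atTop.comp tendsto_natCast_atTop_atTop)).const_mul 2

lemma tendsto_natFloor_rpow_rpow_div_log (c : ℝ) {α : ℝ} (hα : 0 < α) :
    Tendsto (fun n : ℕ => (⌊(n : ℝ) ^ α⌋₊ : ℝ) ^ (2 * (c / Real.log n))) atTop
      (𝓝 (Real.exp (2 * c * α))) := by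
  have hx : Tendsto (fun n : ℕ => (n : ℝ) ^ α) atTop atTop :=
    (tendsto_rpow_atTop hα).comp tendsto_natCast_atTop_atTop
  have ht := tendsto_two_mul_div_log_natCast c
  have hratio : Tendsto (fun n : ℕ => ((⌊(n : ℝ) ^ α⌋₊ : ℝ) / (n : ℝ) ^ α) ^ (2 * (c / Real.log n)))
      atTop (𝓝 1) := by
    simpa using (tendsto_nat_floor_div_atTop.comp hx).rpow ht (Or.inl one_ne_zero)
  have hlim := hratio.mul_const (Real.exp (2 * c * α))
  rw [one_mul] at hlim
  refine hlim.congr' ?_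
  filter_upwards [eventually_gt_atTop 1] with n hn
  have hn' : (1 : ℝ) < n := by exact_mod_cast hn
  rw [← rpow_rpow_div_log hn' c α,
    Real.div_rpow (Nat.cast_nonneg _) (by positivity), div_mul_cancel₀ _ (by positivity)]

theorem stmt6 (c α₁ : ℝ) (hc : 0 < c) (hα : α₁ ∈ Set.Ioo (0 : ℝ) 1) :
    Tendsto (fun n : ℕ =>
        ((⌊(n : ℝ) ^ α₁⌋₊ : ℝ))⁻¹ *
          ∑ l ∈ Finset.Icc 1 ⌊(n : ℝ) ^ α₁⌋₊, (l : ℝ) ^ (2 * (c / Real.log n)))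
      atTop (nhds (Real.exp (2 * c * α₁))) := by
  have hx : Tendsto (fun n : ℕ => (n : ℝ) ^ α₁) atTop atTop :=
    (tendsto_rpow_atTop hα.1).comp tendsto_natCast_atTop_atTop
  refine tendsto_inv_mul_sum_Icc_rpow ?_ ?_ ?_ (tendsto_natFloor_rpow_rpow_div_log c hα.1)
  · filter_upwards [hx.eventually_ge_atTop 1] with n hn
    exact Nat.floor_pos.2 hn
  · filter_upwards [eventually_ge_atTop 1] with n hn
    have : 0 ≤ Real.log n := Real.log_nonneg (by exact_mod_cast hn)
    positivity
  · exact tendsto_two_mul_div_log_natCast c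
end

section
/- Let d_n = c/log n with c > 0, h = ⌊n^{α₁}⌋ with α₁ ∈ (0,1), and ψ_j = ψ_j(d_n) = Γ(j+d_n)/(Γ(d_n)Γ(j+1)). Then h^{−1} Σ_{l=0}^{h−1} (Σ_{j=0}^{l} ψ_j)^2 → e^{2 c α₁} as n → ∞. -/
/-!
By induction, `∑_{j ≤ l} ψ_j(d) = Γ(l + 1 + d) / (Γ(1 + d) Γ(l + 1))`. Log-convexity of `Γ`
gives `Γ(x) x^d / (1 + d) ≤ Γ(x + d) ≤ Γ(x) x^d` for `x ≥ 1`, `0 < d < 1`, so the partial sums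
are `(l + 1)^d` up to factors tending to `1` as `d → 0`. Comparing `∑_{l < h} (l + 1)^{2d}` with
`∫_0^h x^{2d} dx` squeezes the mean of their squares between `h^{2d} / (2d + 1)` and `h^{2d}`
(up to those factors), and `h^{2 d_n} = exp (2c log h / log n) → e^{2cα₁}`.
-/

open Filter

/-- The fractional differencing coefficients `ψ_j(d) = Γ(j+d)/(Γ(d)Γ(j+1))`. -/
noncomputable def psi (d : ℝ) (j : ℕ) : ℝ :=
  Real.Gamma ((j : ℝ) + d) / (Real.Gamma d * Real.Gamma ((j : ℝ) + 1))

open Topology Finset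

namespace Real

lemma Gamma_add_le_Gamma_mul_rpow {x d : ℝ} (hx : 0 < x) (hd₀ : 0 < d) (hd₁ : d < 1) :
    Gamma (x + d) ≤ Gamma x * x ^ d := by
  have hΓ : 0 < Gamma x := Gamma_pos_of_pos hx
  calc Gamma (x + d) = Gamma ((1 - d) * x + d * (x + 1)) := by ring_nf
    _ ≤ Gamma x ^ (1 - d) * Gamma (x + 1) ^ d :=
      Gamma_mul_add_mul_le_rpow_Gamma_mul_rpow_Gamma hx (by linarith) (by linarith) hd₀
        (by ring)
    _ = Gamma x * x ^ d := by
      rw [Gamma_add_one hx.ne', mul_rpow hx.le hΓ.le, mul_left_comm, ← rpow_add hΓ,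
        sub_add_cancel, rpow_one, mul_comm]

lemma Gamma_mul_rpow_le_Gamma_add {x d : ℝ} (hx : 1 ≤ x) (hd₀ : 0 < d) (hd₁ : d < 1) :
    Gamma x * x ^ d ≤ (1 + d) * Gamma (x + d) := by
  have hx₀ : 0 < x := by linarith
  have hxd : 0 < x + d := by linarith
  have hshift : (x + d) ^ (1 - d) ≤ (1 + d) * x ^ (1 - d) :=
    calc (x + d) ^ (1 - d) ≤ ((1 + d) * x) ^ (1 - d) :=
          rpow_le_rpow hxd.le (by nlinarith) (by linarith)
      _ = (1 + d) ^ (1 - d) * x ^ (1 - d) := mul_rpow (by linarith) hx₀.le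
      _ ≤ (1 + d) * x ^ (1 - d) := by
          gcongr
          exact rpow_le_self_of_one_le (by linarith) (by linarith)
  have key : x * Gamma x ≤ Gamma (x + d) * ((1 + d) * x ^ (1 - d)) :=
    calc x * Gamma x = Gamma (x + d + (1 - d)) := by
          rw [add_add_sub_cancel, Gamma_add_one hx₀.ne']
      _ ≤ Gamma (x + d) * (x + d) ^ (1 - d) :=
          Gamma_add_le_Gamma_mul_rpow hxd (by linarith) (by linarith)
      _ ≤ Gamma (x + d) * ((1 + d) * x ^ (1 - d)) := by
          gcongr
  have hsplit : x ^ (1 - d) * x ^ d = x := by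
    rw [← rpow_add hx₀, sub_add_cancel, rpow_one]
  refine le_of_mul_le_mul_left ?_ (rpow_pos_of_pos hx₀ (1 - d))
  calc x ^ (1 - d) * (Gamma x * x ^ d) = (x ^ (1 - d) * x ^ d) * Gamma x := by ring
    _ = x * Gamma x := by rw [hsplit]
    _ ≤ Gamma (x + d) * ((1 + d) * x ^ (1 - d)) := key
    _ = x ^ (1 - d) * ((1 + d) * Gamma (x + d)) := by ring

end Real

open Real

lemma sum_range_succ_psi {d : ℝ} (hd : 0 < d) (l : ℕ) :
    ∑ j ∈ range (l + 1), psi d j = Gamma (l + 1 + d) / (Gamma (1 + d) * Gamma (l + 1)) := by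
  have hΓd : Gamma d ≠ 0 := (Gamma_pos_of_pos hd).ne'
  induction l with
  | zero => simp [psi, add_comm, Gamma_add_one hd.ne', hΓd, hd.ne']
  | succ l ih =>
    have hl : (0 : ℝ) < l + 1 := by positivity
    have hΓl := (Gamma_pos_of_pos hl).ne'
    have e₁ : Gamma (l + 1 + 1 + d) = (l + 1 + d) * Gamma (l + 1 + d) := by
      rw [← Gamma_add_one (by positivity)]; ring_nf
    have e₂ : Gamma (l + 1 + 1) = (l + 1) * Gamma (l + 1) := Gamma_add_one hl.ne'
    have e₃ : Gamma (1 + d) = d * Gamma d := by rw [add_comm, Gamma_add_one hd.ne']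
    rw [sum_range_succ, ih, psi]
    push_cast
    rw [e₁, e₂, e₃]
    field_simp

lemma rpow_add_one_div_le_sum_range_rpow {p : ℝ} (hp : 0 ≤ p) (n : ℕ) :
    (n : ℝ) ^ (p + 1) / (p + 1) ≤ ∑ i ∈ range n, ((i : ℝ) + 1) ^ p := by
  have hmono : MonotoneOn (fun x : ℝ => x ^ p) (Set.Icc 0 (0 + n)) :=
    fun x hx y _ hxy => rpow_le_rpow hx.1 hxy hp
  have hint : ∫ x in (0 : ℝ)..n, x ^ p = (n : ℝ) ^ (p + 1) / (p + 1) := by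
    rw [integral_rpow (Or.inl (by linarith)), zero_rpow (by positivity), sub_zero]
  simpa [hint, add_comm] using hmono.integral_le_sum

lemma mean_sq_bounds_of_rpow_bounds {a : ℕ → ℝ} {A B d : ℝ} (hd : 0 ≤ d) (hA : 0 ≤ A)
    (ha : ∀ l : ℕ, A * ((l : ℝ) + 1) ^ d ≤ a l ∧ a l ≤ B * ((l : ℝ) + 1) ^ d)
    {n : ℕ} (hn : 0 < n) :
    A ^ 2 * ((n : ℝ) ^ d) ^ 2 / (2 * d + 1) ≤ (n : ℝ)⁻¹ * ∑ l ∈ range n, a l ^ 2 ∧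
      (n : ℝ)⁻¹ * ∑ l ∈ range n, a l ^ 2 ≤ B ^ 2 * ((n : ℝ) ^ d) ^ 2 := by
  have hn' : (0 : ℝ) < n := by exact_mod_cast hn
  have hsq : ∀ x : ℝ, 0 ≤ x → (x ^ d) ^ 2 = x ^ (2 * d) := fun x hx => by
    rw [← rpow_mul_natCast hx, mul_comm]; norm_num
  constructor
  · have hsum : A ^ 2 * ((n : ℝ) ^ (2 * d + 1) / (2 * d + 1)) ≤ ∑ l ∈ range n, a l ^ 2 := by
      refine (mul_le_mul_of_nonneg_left (rpow_add_one_div_le_sum_range_rpow (by linarith) n)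
        (sq_nonneg A)).trans ?_
      rw [mul_sum]
      refine sum_le_sum fun l _ => ?_
      rw [← hsq _ (by positivity), ← mul_pow]
      exact pow_le_pow_left₀ (by positivity) (ha l).1 2
    calc A ^ 2 * ((n : ℝ) ^ d) ^ 2 / (2 * d + 1)
        = (n : ℝ)⁻¹ * (A ^ 2 * ((n : ℝ) ^ (2 * d + 1) / (2 * d + 1))) := by
          rw [hsq _ hn'.le, rpow_add_one hn'.ne']; field_simp
      _ ≤ (n : ℝ)⁻¹ * ∑ l ∈ range n, a l ^ 2 := by gcongr
  · have hB : 0 ≤ B := by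
      have := (ha 0).1.trans (ha 0).2
      simp only [Nat.cast_zero, zero_add, one_rpow, mul_one] at this
      linarith
    have hsum : ∑ l ∈ range n, a l ^ 2 ≤ n * (B ^ 2 * ((n : ℝ) ^ d) ^ 2) :=
      calc ∑ l ∈ range n, a l ^ 2 ≤ ∑ _l ∈ range n, B ^ 2 * ((n : ℝ) ^ d) ^ 2 := by
            refine sum_le_sum fun l hl => ?_
            have hl' : (l : ℝ) + 1 ≤ n := by exact_mod_cast Nat.succ_le_of_lt (mem_range.mp hl)
            rw [← mul_pow]
            refine pow_le_pow_left₀ ((mul_nonneg hA (by positivity)).trans (ha l).1)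
              ((ha l).2.trans ?_) 2
            gcongr
        _ = n * (B ^ 2 * ((n : ℝ) ^ d) ^ 2) := by rw [sum_const, card_range, nsmul_eq_mul]
    calc (n : ℝ)⁻¹ * ∑ l ∈ range n, a l ^ 2 ≤ (n : ℝ)⁻¹ * (n * (B ^ 2 * ((n : ℝ) ^ d) ^ 2)) := by
          gcongr
      _ = B ^ 2 * ((n : ℝ) ^ d) ^ 2 := by field_simp

lemma sum_range_succ_psi_bounds {d : ℝ} (hd₀ : 0 < d) (hd₁ : d < 1) (l : ℕ) :
    ((1 + d) * Gamma (1 + d))⁻¹ * ((l : ℝ) + 1) ^ d ≤ ∑ j ∈ range (l + 1), psi d j ∧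
      ∑ j ∈ range (l + 1), psi d j ≤ (Gamma (1 + d))⁻¹ * ((l : ℝ) + 1) ^ d := by
  have hx : (1 : ℝ) ≤ l + 1 := by simp
  have hΓ₁ := Gamma_pos_of_pos (by linarith : 0 < 1 + d)
  have hΓx := Gamma_pos_of_pos (by linarith : (0 : ℝ) < l + 1)
  rw [sum_range_succ_psi hd₀]
  constructor
  · rw [le_div_iff₀ (by positivity)]
    have := Gamma_mul_rpow_le_Gamma_add hx hd₀ hd₁
    field_simp
    linarith
  · rw [div_le_iff₀ (by positivity)]
    have := Gamma_add_le_Gamma_mul_rpow (by linarith) hd₀ hd₁ (x := (l : ℝ) + 1)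
    field_simp
    linarith

lemma tendsto_mean_sq_sum_psi {d : ℕ → ℝ} {h : ℕ → ℕ} {L : ℝ}
    (hd : Tendsto d atTop (𝓝[>] 0)) (hh : ∀ᶠ n in atTop, 0 < h n)
    (hL : Tendsto (fun n => (h n : ℝ) ^ d n) atTop (𝓝 L)) :
    Tendsto (fun n => (h n : ℝ)⁻¹ * ∑ l ∈ range (h n), (∑ j ∈ range (l + 1), psi (d n) j) ^ 2)
      atTop (𝓝 (L ^ 2)) := by
  have hd₀ : Tendsto d atTop (𝓝 0) := hd.mono_right nhdsWithin_le_nhds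
  have h₁ : Tendsto (fun n => 1 + d n) atTop (𝓝 1) := by
    simpa using hd₀.const_add 1
  have hΓ : Tendsto (fun n => Gamma (1 + d n)) atTop (𝓝 1) := by
    simpa [Function.comp_def] using hasDerivAt_Gamma_one.continuousAt.tendsto.comp h₁
  have hA : Tendsto (fun n => ((1 + d n) * Gamma (1 + d n))⁻¹) atTop (𝓝 1) := by
    simpa using (h₁.mul hΓ).inv₀ (by norm_num)
  have hlow : Tendsto (fun n => ((1 + d n) * Gamma (1 + d n))⁻¹ ^ 2 * ((h n : ℝ) ^ d n) ^ 2 /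
      (2 * d n + 1)) atTop (𝓝 (L ^ 2)) := by
    simpa [Pi.div_def] using
      ((hA.pow 2).mul (hL.pow 2)).div ((hd₀.const_mul 2).add_const 1) (by norm_num)
  have hup : Tendsto (fun n => (Gamma (1 + d n))⁻¹ ^ 2 * ((h n : ℝ) ^ d n) ^ 2)
      atTop (𝓝 (L ^ 2)) := by
    simpa using ((hΓ.inv₀ one_ne_zero).pow 2).mul (hL.pow 2)
  have hev : ∀ᶠ n in atTop, d n ∈ Set.Ioo 0 1 ∧ 0 < h n :=
    (hd.eventually_mem (Ioo_mem_nhdsGT one_pos)).and hh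
  refine tendsto_of_tendsto_of_tendsto_of_le_of_le' hlow hup ?_ ?_ <;>
    filter_upwards [hev] with n ⟨⟨hn₀, hn₁⟩, hn⟩
  · exact (mean_sq_bounds_of_rpow_bounds hn₀.le (by positivity)
      (sum_range_succ_psi_bounds hn₀ hn₁) hn).1
  · exact (mean_sq_bounds_of_rpow_bounds hn₀.le (by positivity)
      (sum_range_succ_psi_bounds hn₀ hn₁) hn).2

lemma tendsto_floor_rpow_rpow_div_log (c : ℝ) {α : ℝ} (hα : 0 < α) :
    Tendsto (fun n : ℕ => (⌊(n : ℝ) ^ α⌋₊ : ℝ) ^ (c / log n)) atTop (𝓝 (exp (c * α))) := by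
  have hx : Tendsto (fun n : ℕ => (n : ℝ) ^ α) atTop atTop :=
    (tendsto_rpow_atTop hα).comp tendsto_natCast_atTop_atTop
  have hlog : Tendsto (fun n : ℕ => log n) atTop atTop :=
    tendsto_log_atTop.comp tendsto_natCast_atTop_atTop
  have hratio : Tendsto (fun n : ℕ => log (⌊(n : ℝ) ^ α⌋₊ / (n : ℝ) ^ α)) atTop (𝓝 0) := by
    simpa [Function.comp_def] using
      (continuousAt_log one_ne_zero).tendsto.comp (tendsto_nat_floor_div_atTop.comp hx)
  have hexp : Tendsto (fun n : ℕ => exp (c / log n * log (⌊(n : ℝ) ^ α⌋₊ / (n : ℝ) ^ α) + c * α))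
      atTop (𝓝 (exp (c * α))) := by
    simpa [Function.comp_def] using (continuous_exp.tendsto _).comp
      (((tendsto_const_nhds.div_atTop hlog).mul hratio).add_const (c * α))
  refine hexp.congr' ?_
  filter_upwards [eventually_gt_atTop 0, hlog.eventually_gt_atTop 0, hx.eventually_ge_atTop 1]
    with n hn hlogn hxn
  have hfloor : (0 : ℝ) < ⌊(n : ℝ) ^ α⌋₊ := by simpa using Nat.floor_pos.2 hxn
  rw [rpow_def_of_pos hfloor, log_div hfloor.ne' (by positivity), log_rpow (by positivity)]
  congr 1
  field_simp
  ring

theorem stmt7 (c α₁ : ℝ) (hc : 0 < c) (hα : α₁ ∈ Set.Ioo (0 : ℝ) 1) :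
    Tendsto (fun n : ℕ =>
        ((⌊(n : ℝ) ^ α₁⌋₊ : ℝ))⁻¹ *
          ∑ l ∈ Finset.range ⌊(n : ℝ) ^ α₁⌋₊,
            (∑ j ∈ Finset.range (l + 1), psi (c / Real.log n) j) ^ 2)
      atTop (nhds (Real.exp (2 * c * α₁))) := by
  have hlog : Tendsto (fun n : ℕ => log n) atTop atTop :=
    tendsto_log_atTop.comp tendsto_natCast_atTop_atTop
  have hd : Tendsto (fun n : ℕ => c / log n) atTop (𝓝[>] 0) :=
    tendsto_nhdsWithin_iff.2 ⟨tendsto_const_nhds.div_atTop hlog,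
      (hlog.eventually_gt_atTop 0).mono fun n hn => div_pos hc hn⟩
  have hh : ∀ᶠ n : ℕ in atTop, 0 < ⌊(n : ℝ) ^ α₁⌋₊ :=
    (((tendsto_rpow_atTop hα.1).comp tendsto_natCast_atTop_atTop).eventually_ge_atTop 1).mono
      fun n hn => Nat.floor_pos.2 hn
  have hexp : exp (c * α₁) ^ 2 = exp (2 * c * α₁) := by rw [← exp_nat_mul]; ring_nf
  simpa only [hexp] using tendsto_mean_sq_sum_psi hd hh (tendsto_floor_rpow_rpow_div_log c hα.1)
end

section
/- Let Σ and Σ̂ be real symmetric positive semidefinite p×p matrices with the smallest eigenvalue of Σ bounded below by λ > 0. Then |Σ̂^{1/2} − Σ^{1/2}| ≤ C(λ, p) · |Σ̂ − Σ|^{1/2} for a constant C depending only on λ and p, where |·| is the Frobenius norm and M^{1/2} denotes the positive semidefinite square root. -/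
open Matrix

/-- Frobenius norm of a real square matrix. -/
noncomputable def frob {p : ℕ} (A : Matrix (Fin p) (Fin p) ℝ) : ℝ :=
  Real.sqrt (∑ i, ∑ j, (A i j) ^ 2)

namespace Matrix.PosSemidef

open scoped ComplexOrder

/-- The positive semidefinite square root of a positive semidefinite matrix, with the definition
it had in Mathlib (December 2024), where it has since been removed. -/
noncomputable def sqrt {n : Type*} [Fintype n] [DecidableEq n] {𝕜 : Type*} [RCLike 𝕜]
    {A : Matrix n n 𝕜} (hA : A.PosSemidef) : Matrix n n 𝕜 :=
  hA.1.eigenvectorUnitary.1 * diagonal ((↑) ∘ (√·) ∘ hA.1.eigenvalues) *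
  (star hA.1.eigenvectorUnitary : Matrix n n 𝕜)

end Matrix.PosSemidef

/-!
Write S = √A, T = √B and D = T - S, so that B - A = T D + D S. In an orthonormal eigenbasis
of D, say D = diag(d), the i-th diagonal entry of B - A is d_i (T_ii + S_ii), while
|d_i| = |T_ii - S_ii| ≤ T_ii + S_ii because both are nonnegative; hence d_i² ≤ |(B - A)_ii|.
Summing and applying Cauchy–Schwarz to the diagonal gives ‖D‖_F² = Σ d_i² ≤ √p ‖B - A‖_F,
so C = p^{1/4} works.
-/

lemma sq_sub_le_abs_sq_sub_sq {a b : ℝ} (ha : 0 ≤ a) (hb : 0 ≤ b) :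
    (a - b) ^ 2 ≤ |a ^ 2 - b ^ 2| := by
  rcases le_total b a with h | h
  · rw [abs_of_nonneg (by nlinarith)]
    nlinarith [mul_nonneg hb (sub_nonneg.2 h)]
  · rw [abs_of_nonpos (by nlinarith)]
    nlinarith [mul_nonneg ha (sub_nonneg.2 h)]

namespace Matrix

variable {n : Type*} [Fintype n]

namespace PosSemidef

open scoped ComplexOrder

variable [DecidableEq n] {𝕜 : Type*} [RCLike 𝕜] {A : Matrix n n 𝕜}

lemma posSemidef_sqrt (hA : A.PosSemidef) : hA.sqrt.PosSemidef := by
  have hdiag : (diagonal ((↑) ∘ (√·) ∘ hA.1.eigenvalues : n → 𝕜)).PosSemidef :=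
    PosSemidef.diagonal fun i => RCLike.ofReal_nonneg.mpr (Real.sqrt_nonneg _)
  simpa only [sqrt, star_eq_conjTranspose] using
    hdiag.mul_mul_conjTranspose_same (hA.1.eigenvectorUnitary : Matrix n n 𝕜)

lemma sqrt_mul_self (hA : A.PosSemidef) : hA.sqrt * hA.sqrt = A := by
  set U := hA.1.eigenvectorUnitary
  set R := diagonal ((↑) ∘ (√·) ∘ hA.1.eigenvalues : n → 𝕜)
  have hRR : R * R = diagonal (RCLike.ofReal ∘ hA.1.eigenvalues) := by
    rw [diagonal_mul_diagonal]
    congr 1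
    funext i
    simp only [Function.comp_apply, ← RCLike.ofReal_mul,
      Real.mul_self_sqrt (hA.eigenvalues_nonneg i)]
  conv_rhs => rw [hA.1.spectral_theorem, Unitary.conjStarAlgAut_apply]
  calc hA.sqrt * hA.sqrt
        = U.1 * R * ((star U : Matrix n n 𝕜) * U.1) * R * (star U : Matrix n n 𝕜) := by
          simp only [sqrt, Matrix.mul_assoc]; rfl
    _ = _ := by rw [Unitary.coe_star_mul_self, Matrix.mul_one, Matrix.mul_assoc U.1, hRR]

end PosSemidef

lemma sum_sq_entries_eq_trace (M : Matrix n n ℝ) : ∑ i, ∑ j, M i j ^ 2 = (Mᵀ * M).trace := by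
  simp only [trace, diag, mul_apply, transpose_apply, sq]
  exact Finset.sum_comm

lemma sq_sum_abs_diag_le (M : Matrix n n ℝ) :
    (∑ i, |M i i|) ^ 2 ≤ Fintype.card n * ∑ i, ∑ j, M i j ^ 2 := by
  have hdiag : ∑ i, M i i ^ 2 ≤ ∑ i, ∑ j, M i j ^ 2 :=
    Finset.sum_le_sum fun i _ =>
      Finset.single_le_sum (f := fun j => M i j ^ 2) (fun j _ => sq_nonneg _) (Finset.mem_univ i)
  calc (∑ i, |M i i|) ^ 2 ≤ Fintype.card n * ∑ i, M i i ^ 2 := by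
        simpa [sq_abs] using Finset.sum_mul_sq_le_sq_mul_sq Finset.univ 1 fun i => |M i i|
    _ ≤ _ := by gcongr

variable [DecidableEq n]

lemma sum_sq_entries_transpose_mul_mul {U : Matrix n n ℝ} (hU : U * Uᵀ = 1) (M : Matrix n n ℝ) :
    ∑ i, ∑ j, (Uᵀ * M * U) i j ^ 2 = ∑ i, ∑ j, M i j ^ 2 := by
  have hconj : (Uᵀ * M * U)ᵀ * (Uᵀ * M * U) = Uᵀ * (Mᵀ * M) * U := by
    simp only [transpose_mul, transpose_transpose, Matrix.mul_assoc]
    rw [← Matrix.mul_assoc U Uᵀ, hU, Matrix.one_mul]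
  rw [sum_sq_entries_eq_trace, sum_sq_entries_eq_trace, hconj, trace_mul_cycle, hU,
    Matrix.one_mul]

lemma IsHermitian.exists_transpose_mul_mul_eq_diagonal {D : Matrix n n ℝ} (hD : D.IsHermitian) :
    ∃ U : Matrix n n ℝ, U * Uᵀ = 1 ∧ ∃ d : n → ℝ, Uᵀ * D * U = diagonal d := by
  have hU := mem_unitaryGroup_iff.mp hD.eigenvectorUnitary.2
  have hdiag := hD.conjStarAlgAut_star_eigenvectorUnitary
  simp only [Unitary.conjStarAlgAut_apply, Unitary.coe_star, star_eq_conjTranspose,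
    conjTranspose_eq_transpose_of_trivial] at hU hdiag
  exact ⟨_, hU, _, hdiag⟩

lemma sq_le_abs_mul_self_sub_mul_self_apply {S T : Matrix n n ℝ} (hS : S.PosSemidef)
    (hT : T.PosSemidef) {d : n → ℝ} (hd : T - S = diagonal d) (i : n) :
    d i ^ 2 ≤ |(T * T - S * S) i i| := by
  have hsplit : T * T - S * S = T * (T - S) + (T - S) * S := by noncomm_ring
  have hdi : d i = T i i - S i i := by simpa using (congrFun (congrFun hd i) i).symm
  have hentry : (T * T - S * S) i i = T i i ^ 2 - S i i ^ 2 := by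
    rw [hsplit, hd]
    simp only [add_apply, mul_diagonal, diagonal_mul, hdi]
    ring
  have hSi : 0 ≤ S i i := hS.diag_nonneg
  have hTi : 0 ≤ T i i := hT.diag_nonneg
  rw [hentry, hdi]
  exact sq_sub_le_abs_sq_sub_sq hTi hSi

lemma sq_sum_sq_sub_le_of_eq_diagonal {S T : Matrix n n ℝ} (hS : S.PosSemidef)
    (hT : T.PosSemidef) {d : n → ℝ} (hd : T - S = diagonal d) :
    (∑ i, ∑ j, (T - S) i j ^ 2) ^ 2 ≤ Fintype.card n * ∑ i, ∑ j, (T * T - S * S) i j ^ 2 := by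
  have hsum : ∑ i, ∑ j, (T - S) i j ^ 2 = ∑ i, d i ^ 2 := by
    rw [hd]
    simp [diagonal_apply]
  calc (∑ i, ∑ j, (T - S) i j ^ 2) ^ 2 ≤ (∑ i, |(T * T - S * S) i i|) ^ 2 := by
        rw [hsum]
        gcongr with i
        exact sq_le_abs_mul_self_sub_mul_self_apply hS hT hd i
    _ ≤ _ := sq_sum_abs_diag_le _

theorem sq_sum_sq_sub_le {S T : Matrix n n ℝ} (hS : S.PosSemidef) (hT : T.PosSemidef) :
    (∑ i, ∑ j, (T - S) i j ^ 2) ^ 2 ≤ Fintype.card n * ∑ i, ∑ j, (T * T - S * S) i j ^ 2 := by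
  obtain ⟨U, hU, d, hd⟩ := (hT.1.sub hS.1).exists_transpose_mul_mul_eq_diagonal
  have hconj (X Y : Matrix n n ℝ) : (Uᵀ * X * U) * (Uᵀ * Y * U) = Uᵀ * (X * Y) * U := by
    simp only [Matrix.mul_assoc]
    rw [← Matrix.mul_assoc U, hU, Matrix.one_mul]
  have hconjPSD {X : Matrix n n ℝ} (hX : X.PosSemidef) : (Uᵀ * X * U).PosSemidef := by
    simpa [conjTranspose_eq_transpose_of_trivial] using hX.conjTranspose_mul_mul_same U
  have key := sq_sum_sq_sub_le_of_eq_diagonal (hconjPSD hS) (hconjPSD hT) (d := d)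
    (by rwa [← Matrix.sub_mul, ← Matrix.mul_sub])
  rwa [hconj, hconj, ← Matrix.sub_mul, ← Matrix.mul_sub, ← Matrix.sub_mul, ← Matrix.mul_sub,
    sum_sq_entries_transpose_mul_mul hU, sum_sq_entries_transpose_mul_mul hU] at key

end Matrix

lemma frob_sq {p : ℕ} (A : Matrix (Fin p) (Fin p) ℝ) : frob A ^ 2 = ∑ i, ∑ j, A i j ^ 2 :=
  Real.sq_sqrt (Finset.sum_nonneg fun _ _ => Finset.sum_nonneg fun _ _ => sq_nonneg _)

theorem frob_sub_le_of_posSemidef {p : ℕ} {S T : Matrix (Fin p) (Fin p) ℝ} (hS : S.PosSemidef)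
    (hT : T.PosSemidef) : frob (T - S) ≤ √(√p) * √(frob (T * T - S * S)) := by
  rw [← Real.sqrt_mul (Real.sqrt_nonneg _)]
  apply Real.le_sqrt_of_sq_le
  rw [frob_sq, frob, ← Real.sqrt_mul (Nat.cast_nonneg _)]
  apply Real.le_sqrt_of_sq_le
  simpa using sq_sum_sq_sub_le hS hT

theorem stmt8_general (p : ℕ) (lam : ℝ) :
    ∃ C : ℝ, ∀ (A B : Matrix (Fin p) (Fin p) ℝ) (hA : A.PosSemidef) (hB : B.PosSemidef),
      (∀ x : Fin p → ℝ, lam * (x ⬝ᵥ x) ≤ x ⬝ᵥ (A *ᵥ x)) →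
      frob (hB.sqrt - hA.sqrt) ≤ C * Real.sqrt (frob (B - A)) := by
  refine ⟨√(√p), fun A B hA hB _ => ?_⟩
  simpa only [hA.sqrt_mul_self, hB.sqrt_mul_self] using
    frob_sub_le_of_posSemidef hA.posSemidef_sqrt hB.posSemidef_sqrt

theorem stmt8 (p : ℕ) (lam : ℝ) (hlam : 0 < lam) :
    ∃ C : ℝ, ∀ (A B : Matrix (Fin p) (Fin p) ℝ) (hA : A.PosSemidef) (hB : B.PosSemidef),
      (∀ x : Fin p → ℝ, lam * (x ⬝ᵥ x) ≤ x ⬝ᵥ (A *ᵥ x)) →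
      frob (hB.sqrt - hA.sqrt) ≤ C * Real.sqrt (frob (B - A)) :=
  stmt8_general p lam
end

section
/- Let h = o(n), h → ∞, d_n = c/log n with c > 0. Then Σ_{l=0}^∞ ((h+l)^{d_n} − l^{d_n})² = O(h/ log h) as n → ∞ (where the l = 0 term is h^{2d_n}). -/
/-!
Write `H = h n`, `d = c / log n` and `L = log H`. Since `H ≤ n`, we have `d L ≤ c`, so
`x ^ (2d) ≤ exp (2c)` for every `0 < x ≤ H`. Split the sum at `m = ⌈H / L⌉`. By subadditivity of
`x ↦ x ^ d`, each term is at most `H ^ (2d) ≤ exp (2c)`, so the first `m + 1` terms contribute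
`O(H / L)`. By concavity each later term is at most `d² H² l ^ (2d - 2)`, and the tail
`∑_{l > m} l ^ (2d - 2) ≤ 2 m ^ (2d - 1) ≤ 2 exp (2c) L / H` telescopes; with `d² ≤ c² / L²` this is
again `O(H / L)`.
-/

open Filter Finset Real

lemma rpow_add_le_rpow_add_mul_rpow_sub_one {a b d : ℝ} (hb : 0 < b) (hab : -b ≤ a)
    (hd0 : 0 ≤ d) (hd1 : d ≤ 1) :
    (a + b) ^ d ≤ b ^ d + d * a * b ^ (d - 1) := by
  have hs : -1 ≤ a / b := by rwa [le_div_iff₀ hb, neg_one_mul]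
  calc (a + b) ^ d = b ^ d * (1 + a / b) ^ d := by
        rw [← mul_rpow hb.le (by linarith)]
        congr 1; field_simp; ring
    _ ≤ b ^ d * (1 + d * (a / b)) := by gcongr; exact rpow_one_add_le_one_add_mul_self hs hd0 hd1
    _ = b ^ d + d * a * b ^ (d - 1) := by rw [rpow_sub_one hb.ne']; field_simp

lemma mul_rpow_neg_sub_one_le {x q : ℝ} (hx : 1 < x) (hq0 : 0 ≤ q) (hq1 : q ≤ 1) :
    q * x ^ (-q - 1) ≤ (x - 1) ^ (-q) - x ^ (-q) := by
  have hx0 : 0 < x := by linarith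
  have hab : x * (x - 1) ^ q ≤ x ^ q * (x - q) := by
    have := rpow_add_le_rpow_add_mul_rpow_sub_one hx0 (by linarith : -x ≤ -1) hq0 hq1
    rw [rpow_sub_one hx0.ne', neg_add_eq_sub] at this
    calc x * (x - 1) ^ q ≤ x * (x ^ q + q * -1 * (x ^ q / x)) := by gcongr
      _ = x ^ q * (x - q) := by field_simp; ring
  have hle : (x - 1) ^ q ≤ x ^ q := rpow_le_rpow (by linarith) (by linarith) hq0
  have hpos := rpow_pos_of_pos (by linarith : 0 < x - 1) q
  rw [rpow_neg (by linarith), rpow_neg hx0.le, rpow_sub_one hx0.ne', rpow_neg hx0.le]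
  field_simp
  nlinarith [mul_le_mul_of_nonneg_left hle hq0]

lemma mul_sum_Ico_rpow_neg_sub_one_le {q : ℝ} (hq0 : 0 ≤ q) (hq1 : q ≤ 1) {m : ℕ} (hm : 1 ≤ m)
    (n : ℕ) : q * ∑ l ∈ Ico (m + 1) n, (l : ℝ) ^ (-q - 1) ≤ (m : ℝ) ^ (-q) := by
  rcases lt_or_ge n (m + 1) with hn | hn
  · simp [Ico_eq_empty_of_le hn.le, rpow_nonneg]
  set g : ℕ → ℝ := fun i => -((i : ℝ) - 1) ^ (-q)
  calc q * ∑ l ∈ Ico (m + 1) n, (l : ℝ) ^ (-q - 1)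
      ≤ ∑ l ∈ Ico (m + 1) n, (g (l + 1) - g l) := by
        rw [mul_sum]
        refine sum_le_sum fun l hl => ?_
        have hl : (1 : ℝ) < l := by
          have := (mem_Ico.1 hl).1
          exact_mod_cast (by omega : 1 < l)
        simpa [g, sub_eq_neg_add, add_comm] using mul_rpow_neg_sub_one_le hl hq0 hq1
    _ = (m : ℝ) ^ (-q) - ((n : ℝ) - 1) ^ (-q) := by
        rw [sum_Ico_sub g hn]; simp [g]; ring
    _ ≤ (m : ℝ) ^ (-q) := by
        have : (1 : ℝ) ≤ n := by exact_mod_cast (by omega : 1 ≤ n)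
        linarith [rpow_nonneg (by linarith : (0 : ℝ) ≤ n - 1) (-q)]

lemma sq_rpow_add_sub_rpow_le_rpow_two_mul {a b d : ℝ} (ha : 0 ≤ a) (hb : 0 ≤ b)
    (hd0 : 0 ≤ d) (hd1 : d ≤ 1) : ((a + b) ^ d - b ^ d) ^ 2 ≤ a ^ (2 * d) := by
  have hmono : b ^ d ≤ (a + b) ^ d := rpow_le_rpow hb (by linarith) hd0
  have hsub : (a + b) ^ d ≤ a ^ d + b ^ d := rpow_add_le_add_rpow ha hb hd0 hd1
  calc ((a + b) ^ d - b ^ d) ^ 2 ≤ (a ^ d) ^ 2 := by gcongr; linarith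
    _ = a ^ (2 * d) := by rw [← rpow_natCast, ← rpow_mul ha]; ring_nf

lemma sq_rpow_add_sub_rpow_le_mul_rpow_s14 {a b d : ℝ} (ha : 0 ≤ a) (hb : 0 < b)
    (hd0 : 0 ≤ d) (hd1 : d ≤ 1) :
    ((a + b) ^ d - b ^ d) ^ 2 ≤ d ^ 2 * a ^ 2 * b ^ (2 * d - 2) := by
  have hmono : b ^ d ≤ (a + b) ^ d := rpow_le_rpow hb.le (by linarith) hd0
  have htangent := rpow_add_le_rpow_add_mul_rpow_sub_one (a := a) hb (by linarith) hd0 hd1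
  calc ((a + b) ^ d - b ^ d) ^ 2 ≤ (d * a * b ^ (d - 1)) ^ 2 := by gcongr; linarith
    _ = d ^ 2 * a ^ 2 * b ^ (2 * d - 2) := by
        rw [mul_pow, ← rpow_natCast (b ^ (d - 1)), ← rpow_mul hb.le]; ring_nf

lemma sum_Ico_sq_rpow_add_sub_rpow_le {a d : ℝ} (ha : 0 ≤ a) (hd0 : 0 ≤ d) (hd1 : d ≤ 1 / 4)
    {m : ℕ} (hm : 1 ≤ m) (n : ℕ) :
    ∑ l ∈ Ico (m + 1) n, ((a + l) ^ d - (l : ℝ) ^ d) ^ 2 ≤ 2 * d ^ 2 * a ^ 2 * m ^ (2 * d - 1) := by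
  have hsum := mul_sum_Ico_rpow_neg_sub_one_le (q := 1 - 2 * d) (by linarith) (by linarith) hm n
  rw [show -(1 - 2 * d) - 1 = 2 * d - 2 by ring, neg_sub] at hsum
  have hsum_nonneg : 0 ≤ ∑ l ∈ Ico (m + 1) n, (l : ℝ) ^ (2 * d - 2) :=
    sum_nonneg fun l _ => rpow_nonneg l.cast_nonneg _
  calc ∑ l ∈ Ico (m + 1) n, ((a + l) ^ d - (l : ℝ) ^ d) ^ 2
      ≤ ∑ l ∈ Ico (m + 1) n, d ^ 2 * a ^ 2 * (l : ℝ) ^ (2 * d - 2) := by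
        refine sum_le_sum fun l hl => sq_rpow_add_sub_rpow_le_mul_rpow_s14 ha ?_ hd0 (by linarith)
        exact Nat.cast_pos.2 (by have := (mem_Ico.1 hl).1; omega)
    _ = d ^ 2 * a ^ 2 * ∑ l ∈ Ico (m + 1) n, (l : ℝ) ^ (2 * d - 2) := by rw [mul_sum]
    _ ≤ d ^ 2 * a ^ 2 * (2 * m ^ (2 * d - 1)) := by gcongr; nlinarith
    _ = 2 * d ^ 2 * a ^ 2 * m ^ (2 * d - 1) := by ring

lemma summable_and_tsum_le_of_le_of_sum_Ico_le {F : ℕ → ℝ} (hF : ∀ l, 0 ≤ F l) (m : ℕ) {A B : ℝ}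
    (hA : ∀ l, F l ≤ A) (hB : ∀ n, ∑ l ∈ Ico (m + 1) n, F l ≤ B) :
    Summable F ∧ ∑' l, F l ≤ (m + 1) * A + B := by
  have hpartial : ∀ k, ∑ l ∈ range k, F l ≤ (m + 1) * A + B := fun k => by
    have hhead : ∑ l ∈ range (m + 1), F l ≤ (m + 1) * A := by
      simpa using sum_le_card_nsmul (range (m + 1)) F A fun l _ => hA l
    calc ∑ l ∈ range k, F l ≤ ∑ l ∈ range (max k (m + 1)), F l :=
          sum_le_sum_of_subset_of_nonneg (range_subset_range.2 (le_max_left _ _))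
            fun l _ _ => hF l
      _ = ∑ l ∈ range (m + 1), F l + ∑ l ∈ Ico (m + 1) (max k (m + 1)), F l :=
          (sum_range_add_sum_Ico F (le_max_right _ _)).symm
      _ ≤ (m + 1) * A + B := add_le_add hhead (hB _)
  exact ⟨summable_of_sum_range_le hF hpartial, Real.tsum_le_of_sum_range_le hF hpartial⟩

lemma rpow_two_mul_le_exp_two_mul {c d x H : ℝ} (hx : 0 < x) (hxH : x ≤ H) (hd : 0 ≤ d)
    (hdH : d * log H ≤ c) : x ^ (2 * d) ≤ exp (2 * c) := by
  rw [rpow_def_of_pos hx]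
  exact exp_le_exp.2 (by nlinarith [log_le_log hx hxH])

lemma summable_and_tsum_sq_rpow_add_sub_rpow_le {c d H : ℝ} (hd0 : 0 ≤ d) (hd1 : d ≤ 1 / 4)
    (hH : exp 2 ≤ H) (hdH : d * log H ≤ c) :
    Summable (fun l : ℕ => ((H + l) ^ d - (l : ℝ) ^ d) ^ 2) ∧
      ∑' l : ℕ, ((H + l) ^ d - (l : ℝ) ^ d) ^ 2 ≤ (3 + 2 * c ^ 2) * exp (2 * c) * H / log H := by
  have hH0 : 0 < H := (exp_pos 2).trans_le hH
  have hL : 2 ≤ log H := (le_log_iff_exp_le hH0).2 hH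
  set L := log H
  set E := exp (2 * c)
  have hL0 : 0 < L := by linarith
  set m := ⌈H / L⌉₊
  have hHL : 1 ≤ H / L := by
    rw [le_div_iff₀ hL0, one_mul]; linarith [log_le_sub_one_of_pos hH0]
  have hm0 : (0 : ℝ) < m := by positivity
  have hmlb : H / L ≤ m := Nat.le_ceil _
  have hmub : (m : ℝ) < H / L + 1 := Nat.ceil_lt_add_one (by positivity)
  have hmH : (m : ℝ) ≤ H := by
    have : H / L ≤ H / 2 := by gcongr
    linarith
  have hhead : ∀ l : ℕ, ((H + l) ^ d - (l : ℝ) ^ d) ^ 2 ≤ E := fun l =>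
    (sq_rpow_add_sub_rpow_le_rpow_two_mul hH0.le l.cast_nonneg hd0 (by linarith)).trans
      (rpow_two_mul_le_exp_two_mul hH0 le_rfl hd0 hdH)
  have hm_rpow : (m : ℝ) ^ (2 * d - 1) ≤ E * (L / H) := by
    rw [rpow_sub_one hm0.ne', div_le_iff₀ hm0]
    calc (m : ℝ) ^ (2 * d) ≤ E := rpow_two_mul_le_exp_two_mul hm0 hmH hd0 hdH
      _ ≤ E * (L / H * m) := by
        refine le_mul_of_one_le_right (exp_pos _).le ?_
        rwa [div_mul_eq_mul_div, one_le_div hH0, ← div_le_iff₀' hL0]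
      _ = E * (L / H) * m := by ring
  have hdL : (d * L) ^ 2 ≤ c ^ 2 := by gcongr
  have htail : ∀ n, ∑ l ∈ Ico (m + 1) n, ((H + l) ^ d - (l : ℝ) ^ d) ^ 2
      ≤ 2 * c ^ 2 * E * (H / L) := fun n =>
    calc _ ≤ 2 * d ^ 2 * H ^ 2 * m ^ (2 * d - 1) :=
          sum_Ico_sq_rpow_add_sub_rpow_le hH0.le hd0 hd1 (by exact_mod_cast hm0) n
      _ ≤ 2 * d ^ 2 * H ^ 2 * (E * (L / H)) := by gcongr
      _ = 2 * E * ((d * L) ^ 2 * (H / L)) := by field_simp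
      _ ≤ 2 * E * (c ^ 2 * (H / L)) := by gcongr
      _ = 2 * c ^ 2 * E * (H / L) := by ring
  obtain ⟨hsummable, htsum⟩ :=
    summable_and_tsum_le_of_le_of_sum_Ico_le (fun l => sq_nonneg _) m hhead htail
  refine ⟨hsummable, htsum.trans ?_⟩
  calc (m + 1) * E + 2 * c ^ 2 * E * (H / L) ≤ 3 * (H / L) * E + 2 * c ^ 2 * E * (H / L) := by
        gcongr; linarith
    _ = (3 + 2 * c ^ 2) * E * H / L := by ring

theorem stmt14 (c : ℝ) (hc : 0 < c) (h : ℕ → ℕ)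
    (hho : Tendsto (fun n : ℕ => (h n : ℝ) / (n : ℝ)) atTop (nhds 0))
    (hhi : Tendsto h atTop atTop) :
    ∃ C : ℝ, ∃ N : ℕ, ∀ n : ℕ, N ≤ n →
      Summable (fun l : ℕ =>
        (((h n : ℝ) + (l : ℝ)) ^ (c / Real.log n) - (l : ℝ) ^ (c / Real.log n)) ^ 2) ∧
      ∑' l : ℕ,
          (((h n : ℝ) + (l : ℝ)) ^ (c / Real.log n) - (l : ℝ) ^ (c / Real.log n)) ^ 2
        ≤ C * (h n : ℝ) / Real.log (h n) := by
  have hh_large : ∀ᶠ n in atTop, exp 2 ≤ (h n : ℝ) :=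
    (tendsto_natCast_atTop_atTop.comp hhi).eventually_ge_atTop _
  have hh_le : ∀ᶠ n : ℕ in atTop, (h n : ℝ) / n < 1 := hho.eventually (eventually_lt_nhds one_pos)
  have hlog_large : ∀ᶠ n : ℕ in atTop, 4 * c ≤ log n :=
    (tendsto_log_atTop.comp tendsto_natCast_atTop_atTop).eventually_ge_atTop _
  obtain ⟨N, hN⟩ := eventually_atTop.1 (hh_large.and (hh_le.and hlog_large))
  refine ⟨(3 + 2 * c ^ 2) * exp (2 * c), N, fun n hn => ?_⟩
  obtain ⟨hH, hHn, hlogn⟩ := hN n hn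
  have hlogn0 : 0 < log n := by linarith
  have hn0 : (0 : ℝ) < n := Nat.cast_pos.2 (Nat.pos_of_ne_zero (by rintro rfl; simp at hlogn0))
  have hHn' : (h n : ℝ) ≤ n := ((div_lt_one hn0).1 hHn).le
  have hlogH : log (h n) ≤ log n := log_le_log ((exp_pos 2).trans_le hH) hHn'
  refine summable_and_tsum_sq_rpow_add_sub_rpow_le (by positivity)
    (by rw [div_le_iff₀ hlogn0]; linarith) hH ?_
  rw [div_mul_eq_mul_div, div_le_iff₀ hlogn0]
  exact mul_le_mul_of_nonneg_left hlogH hc.le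
end

section
/- Let d ∈ (0,1/2), m ≥ 1. For the coefficients p_j = Σ_{i=0}^{min(m,j)−1} ψ_{j−i}(d) (with ψ the fractional differencing coefficients, and modulo boundary adjustments p_j = O(m j^{d−1}) for j ≥ m), one has Σ_{j=0}^{L+m−1} p_j² = O(m^{2d+1}) for any L ≥ m. -/
open Real Finset

theorem Real.Gamma_add_le_rpow_mul_Gamma {a d : ℝ} (ha : 0 < a) (hd0 : 0 < d) (hd1 : d < 1) :
    Gamma (a + d) ≤ a ^ d * Gamma a := by
  have hΓ : 0 < Gamma a := Gamma_pos_of_pos ha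
  calc Gamma (a + d) = Gamma ((1 - d) * a + d * (a + 1)) := by ring_nf
    _ ≤ Gamma a ^ (1 - d) * Gamma (a + 1) ^ d :=
        Gamma_mul_add_mul_le_rpow_Gamma_mul_rpow_Gamma ha (by linarith) (by linarith) hd0
          (by ring)
    _ = a ^ d * Gamma a := by
        rw [Gamma_add_one ha.ne', mul_rpow ha.le hΓ.le, rpow_sub hΓ, rpow_one]
        field_simp

theorem psi_nonneg {d : ℝ} (hd : 0 < d) (j : ℕ) : 0 ≤ psi d j := by
  have := Gamma_pos_of_pos hd
  have := Gamma_pos_of_pos (by positivity : (0 : ℝ) < j + d)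
  have := Gamma_pos_of_pos (by positivity : (0 : ℝ) < j + 1)
  unfold psi
  positivity

theorem psi_le_rpow {d : ℝ} (hd0 : 0 < d) (hd1 : d < 1) {n : ℕ} (hn : n ≠ 0) :
    psi d n ≤ (n : ℝ) ^ (d - 1) / Gamma d := by
  have hn0 : (0 : ℝ) < n := by positivity
  have := Gamma_pos_of_pos hn0
  have := Gamma_pos_of_pos hd0
  rw [psi, Gamma_add_one hn0.ne', rpow_sub_one hn0.ne']
  calc Gamma (n + d) / (Gamma d * (n * Gamma n))
      ≤ (n : ℝ) ^ d * Gamma n / (Gamma d * (n * Gamma n)) := by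
        gcongr
        exact Gamma_add_le_rpow_mul_Gamma hn0 hd0 hd1
    _ = (n : ℝ) ^ d / n / Gamma d := by field_simp

theorem sum_range_natCast_add_one_rpow_le {d : ℝ} (hd0 : 0 < d) (hd1 : d ≤ 1) (n : ℕ) :
    ∑ i ∈ range n, ((i + 1 : ℕ) : ℝ) ^ (d - 1) ≤ (n : ℝ) ^ d / d := by
  rcases n with _ | n
  · simp [zero_rpow hd0.ne']
  have hanti : AntitoneOn (fun x : ℝ => x ^ (d - 1)) (Set.Icc 1 (1 + n)) :=
    fun x hx y _ hxy => rpow_le_rpow_of_nonpos (by linarith [hx.1]) hxy (by linarith)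
  have hint : ∫ x in (1 : ℝ)..1 + n, x ^ (d - 1) = ((1 + n) ^ d - 1) / d := by
    rw [integral_rpow (Or.inl (by linarith))]
    simp
  have htail : ∑ i ∈ range n, ((i + 1 + 1 : ℕ) : ℝ) ^ (d - 1) ≤ ((1 + n) ^ d - 1) / d := by
    have h := hanti.sum_le_integral
    rw [hint] at h
    simpa only [Nat.cast_add, Nat.cast_one, add_comm] using h
  have hd_inv : 1 ≤ 1 / d := by rw [le_div_iff₀ hd0]; linarith
  calc ∑ i ∈ range (n + 1), ((i + 1 : ℕ) : ℝ) ^ (d - 1)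
      = ∑ i ∈ range n, ((i + 1 + 1 : ℕ) : ℝ) ^ (d - 1) + 1 := by simp [sum_range_succ']
    _ ≤ ((1 + n) ^ d - 1) / d + 1 := by gcongr
    _ ≤ ((n + 1 : ℕ) : ℝ) ^ d / d := by
        rw [sub_div, Nat.cast_succ, add_comm (n : ℝ)]
        linarith

theorem sum_range_add_rpow_le {s x : ℝ} (hs : s < -1) (hx : 0 < x) (N : ℕ) :
    ∑ k ∈ range N, (x + (k + 1 : ℕ)) ^ s ≤ x ^ (s + 1) / -(s + 1) := by
  have hanti : AntitoneOn (fun y : ℝ => y ^ s) (Set.Icc x (x + N)) :=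
    fun y hy z _ hyz => rpow_le_rpow_of_nonpos (hx.trans_le hy.1) hyz (by linarith)
  have hint : ∫ y in x..x + N, y ^ s = ((x + N) ^ (s + 1) - x ^ (s + 1)) / (s + 1) :=
    integral_rpow (Or.inr ⟨hs.ne, Set.notMem_uIcc_of_lt hx (by positivity)⟩)
  have : 0 ≤ (x + N) ^ (s + 1) := by positivity
  calc ∑ k ∈ range N, (x + (k + 1 : ℕ)) ^ s ≤ ∫ y in x..x + N, y ^ s := hanti.sum_le_integral
    _ = (x ^ (s + 1) - (x + N) ^ (s + 1)) / -(s + 1) := by rw [hint, ← neg_div_neg_eq, neg_sub]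
    _ ≤ x ^ (s + 1) / -(s + 1) := div_le_div_of_nonneg_right (by linarith) (by linarith)

-- The paper's `p_j`.
noncomputable def psiWindowSum (d : ℝ) (m j : ℕ) : ℝ :=
  ∑ i ∈ range (min m j), psi d (j - i)

section psiWindowSum

variable {d : ℝ}

theorem psiWindowSum_nonneg (hd : 0 < d) (m j : ℕ) : 0 ≤ psiWindowSum d m j :=
  sum_nonneg fun _ _ => psi_nonneg hd _

theorem psiWindowSum_le_rpow (hd0 : 0 < d) (hd1 : d < 1) (m j : ℕ) :
    psiWindowSum d m j ≤ (j : ℝ) ^ d / Gamma (d + 1) := by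
  calc psiWindowSum d m j ≤ ∑ i ∈ range j, psi d (j - i) :=
        sum_le_sum_of_subset_of_nonneg (range_subset_range.2 (min_le_right m j))
          fun _ _ _ => psi_nonneg hd0 _
    _ = ∑ i ∈ range j, psi d (i + 1) := by
        rw [← sum_range_reflect]
        refine sum_congr rfl fun i hi => ?_
        rw [mem_range] at hi
        congr 1
        omega
    _ ≤ ∑ i ∈ range j, ((i + 1 : ℕ) : ℝ) ^ (d - 1) / Gamma d :=
        sum_le_sum fun i _ => psi_le_rpow hd0 hd1 i.succ_ne_zero
    _ ≤ (j : ℝ) ^ d / d / Gamma d := by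
        rw [← sum_div]
        gcongr
        exact sum_range_natCast_add_one_rpow_le hd0 hd1.le j
    _ = (j : ℝ) ^ d / Gamma (d + 1) := by rw [Gamma_add_one hd0.ne', div_div]

theorem psiWindowSum_add_le (hd0 : 0 < d) (hd1 : d < 1) (m k : ℕ) :
    psiWindowSum d m (m + k) ≤ m * (((k + 1 : ℕ) : ℝ) ^ (d - 1) / Gamma d) := by
  rw [psiWindowSum, min_eq_left (Nat.le_add_right m k)]
  calc ∑ i ∈ range m, psi d (m + k - i)
      ≤ ∑ _i ∈ range m, ((k + 1 : ℕ) : ℝ) ^ (d - 1) / Gamma d := by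
        refine sum_le_sum fun i hi => ?_
        rw [mem_range] at hi
        refine (psi_le_rpow hd0 hd1 (by omega)).trans <| div_le_div_of_nonneg_right ?_
          (Gamma_pos_of_pos hd0).le
        exact rpow_le_rpow_of_nonpos (by positivity)
          (by exact_mod_cast (by omega : k + 1 ≤ m + k - i)) (by linarith)
    _ = m * (((k + 1 : ℕ) : ℝ) ^ (d - 1) / Gamma d) := by simp

theorem sum_range_two_mul_sq_psiWindowSum_le (hd0 : 0 < d) (hd1 : d < 1) (m : ℕ) :
    ∑ j ∈ range (2 * m), psiWindowSum d m j ^ 2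
      ≤ 2 ^ (2 * d + 1) / Gamma (d + 1) ^ 2 * (m : ℝ) ^ (2 * d + 1) := by
  have hterm : ∀ j ∈ range (2 * m),
      psiWindowSum d m j ^ 2 ≤ ((2 * m : ℝ) ^ d / Gamma (d + 1)) ^ 2 := by
    intro j hj
    gcongr
    · exact psiWindowSum_nonneg hd0 m j
    refine (psiWindowSum_le_rpow hd0 hd1 m j).trans ?_
    gcongr
    exact_mod_cast (mem_range.1 hj).le
  calc ∑ j ∈ range (2 * m), psiWindowSum d m j ^ 2
      ≤ ∑ _j ∈ range (2 * m), ((2 * m : ℝ) ^ d / Gamma (d + 1)) ^ 2 := sum_le_sum hterm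
    _ = (2 * m : ℝ) ^ (2 * d + 1) / Gamma (d + 1) ^ 2 := by
        rw [sum_const, card_range, nsmul_eq_mul, div_pow, ← rpow_mul_natCast (by positivity),
          rpow_add_of_nonneg (by positivity) (by positivity) zero_le_one, rpow_one]
        push_cast
        ring_nf
    _ = 2 ^ (2 * d + 1) / Gamma (d + 1) ^ 2 * (m : ℝ) ^ (2 * d + 1) := by
        rw [mul_rpow zero_le_two m.cast_nonneg]
        ring

theorem sum_Ico_sq_psiWindowSum_le (hd0 : 0 < d) (hd2 : d < 1 / 2) {m : ℕ} (hm : m ≠ 0) (n : ℕ) :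
    ∑ j ∈ Ico (2 * m) n, psiWindowSum d m j ^ 2
      ≤ 1 / ((1 - 2 * d) * Gamma d ^ 2) * (m : ℝ) ^ (2 * d + 1) := by
  have hm0 : (0 : ℝ) < m := by positivity
  have hterm : ∀ k : ℕ, psiWindowSum d m (2 * m + k) ^ 2
      ≤ (m / Gamma d) ^ 2 * ((m : ℝ) + (k + 1 : ℕ)) ^ (2 * d - 2) := by
    intro k
    rw [two_mul, add_assoc]
    calc psiWindowSum d m (m + (m + k)) ^ 2
        ≤ (m * (((m + k + 1 : ℕ) : ℝ) ^ (d - 1) / Gamma d)) ^ 2 :=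
          pow_le_pow_left₀ (psiWindowSum_nonneg hd0 m _)
            (psiWindowSum_add_le hd0 (by linarith) m (m + k)) 2
      _ = (m / Gamma d) ^ 2 * ((m : ℝ) + (k + 1 : ℕ)) ^ (2 * d - 2) := by
          rw [show 2 * d - 2 = (d - 1) * (2 : ℕ) by push_cast; ring,
            rpow_mul_natCast (by positivity)]
          push_cast
          ring_nf
  rw [sum_Ico_eq_sum_range]
  calc ∑ k ∈ range (n - 2 * m), psiWindowSum d m (2 * m + k) ^ 2
      ≤ ∑ k ∈ range (n - 2 * m), (m / Gamma d) ^ 2 * ((m : ℝ) + (k + 1 : ℕ)) ^ (2 * d - 2) :=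
        sum_le_sum fun k _ => hterm k
    _ = (m / Gamma d) ^ 2 * ∑ k ∈ range (n - 2 * m), ((m : ℝ) + (k + 1 : ℕ)) ^ (2 * d - 2) :=
        (mul_sum _ _ _).symm
    _ ≤ (m / Gamma d) ^ 2 * ((m : ℝ) ^ (2 * d - 1) / (1 - 2 * d)) := by
        gcongr
        refine (sum_range_add_rpow_le (by linarith) hm0 _).trans_eq ?_
        congr 1 <;> ring_nf
    _ = 1 / ((1 - 2 * d) * Gamma d ^ 2) * (m : ℝ) ^ (2 * d + 1) := by
        rw [show 2 * d + 1 = 2 * d - 1 + 2 by ring, rpow_add hm0 _ 2, rpow_two]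
        have := Gamma_pos_of_pos hd0
        have : 1 - 2 * d ≠ 0 := by linarith
        field_simp

end psiWindowSum

theorem stmt16 (d : ℝ) (hd : 0 < d) (hd2 : d < 1 / 2) :
    ∃ C : ℝ, ∀ m L : ℕ, 1 ≤ m → m ≤ L →
      ∑ j ∈ Finset.range (L + m),
          (∑ i ∈ Finset.range (min m j), psi d (j - i)) ^ 2
        ≤ C * (m : ℝ) ^ (2 * d + 1) := by
  refine ⟨2 ^ (2 * d + 1) / Gamma (d + 1) ^ 2 + 1 / ((1 - 2 * d) * Gamma d ^ 2),
    fun m L hm hmL => ?_⟩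
  rw [range_eq_Ico, ← sum_Ico_consecutive _ (Nat.zero_le (2 * m)) (by omega : 2 * m ≤ L + m),
    ← range_eq_Ico, add_mul]
  exact add_le_add (sum_range_two_mul_sq_psiWindowSum_le hd (by linarith) m)
    (sum_Ico_sq_psiWindowSum_le hd hd2 (by omega) _)
end
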